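/- arXiv:1607.02675 — 5 statements merged into one kernel-verified Lean document; each statement's English description precedes it below -/
import Mathlib

section
/- Let M ∈ ℝ^{n×n} be any symmetric matrix and let X_M maximize ⟨M,X⟩ over the feasible set F. Let Q ∈ ℝ^{n×n} be a reference matrix such that Q_{ij} = β_k^{in} for all i,j ∈ C_k (for each k), and 0 ≤ Q_{ij} ≤ β_k^{out} for all i ∈ C_k, j ∈ C_ℓ with k ≠ ℓ. If min_k (β_k^{in} − β_k^{out}) ≥ 0, then m_min · min_k (β_k^{in} − β_k^{out}) · ‖X_M − X₀‖_F² ≤ 2 ⟨M − Q, X_M − X₀⟩. -/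
open Matrix

noncomputable section

/-- The size `m_k` of cluster `C_k = {i : z i = k}` of the partition given by `z`. -/
def clusterSize {n r : ℕ} (z : Fin n → Fin r) (k : Fin r) : ℕ :=
  (Finset.univ.filter fun i => z i = k).card

/-- The smallest cluster size `m_min`. -/
def mMin {n r : ℕ} [NeZero r] (z : Fin n → Fin r) : ℕ :=
  Finset.univ.inf' Finset.univ_nonempty (clusterSize z)

/-- The largest cluster size `m_max`. -/
def mMax {n r : ℕ} [NeZero r] (z : Fin n → Fin r) : ℕ :=
  Finset.univ.sup' Finset.univ_nonempty (clusterSize z)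

/-- The ground-truth clustering matrix `X₀`, `(X₀)_{ij} = 1/m_k` if `i,j ∈ C_k`, else `0`. -/
def groundTruth {n r : ℕ} (z : Fin n → Fin r) : Matrix (Fin n) (Fin n) ℝ :=
  Matrix.of fun i j => if z i = z j then ((clusterSize z (z i) : ℝ))⁻¹ else 0

/-- Trace inner product `⟨A, B⟩ = trace (Aᵀ B) = ∑_{ij} A_{ij} B_{ij}`. -/
def ip {n : ℕ} (A B : Matrix (Fin n) (Fin n) ℝ) : ℝ := ∑ i, ∑ j, A i j * B i j

/-- Squared Frobenius norm `‖A‖_F²`. -/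
def frobSq {m k : ℕ} (A : Matrix (Fin m) (Fin k) ℝ) : ℝ := ∑ i, ∑ j, (A i j) ^ 2

/-- The feasible set `F` of the SDP: `X ⪰ 0`, `0 ≤ X_{ij} ≤ 1/m_min`, all row sums `1`,
`trace X = r`. -/
def feasSet {n r : ℕ} [NeZero r] (z : Fin n → Fin r) (X : Matrix (Fin n) (Fin n) ℝ) : Prop :=
  X.PosSemidef ∧ (∀ i j, 0 ≤ X i j) ∧ (∀ i j, X i j ≤ ((mMin z : ℝ))⁻¹) ∧
    (∀ i, ∑ j, X i j = 1) ∧ X.trace = (r : ℝ)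

/-- Minimum of a real-valued function over the (nonempty) index set `Fin r`. -/
def rMin {r : ℕ} [NeZero r] (f : Fin r → ℝ) : ℝ :=
  Finset.univ.inf' Finset.univ_nonempty f

/-!
Optimality of `X_M` against the feasible point `X₀` gives `⟨M, X_M - X₀⟩ ≥ 0`, so it suffices to
bound both `⟨Q, X_M - X₀⟩` and `‖X_M - X₀‖_F²` by the total off-block mass `∑ i, o i` of `X_M`,
where `o i` is the mass of row `i` outside the cluster of `i`. Since the rows of `X_M` sum to `1`,
the in-block part of row `i` of `X_M - X₀` sums to `-o i`, whence
`⟨Q, X_M - X₀⟩ ≤ -∑ i, (β^in - β^out) o i`.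
For the distance, a nonnegative positive semidefinite matrix with unit row sums has
`‖X‖_F² ≤ tr X` (entrywise `2 X_ij ≤ X_ii + X_jj`), and `tr X_M = r = ‖X₀‖_F²`; together with
`⟨X_M - X₀, X₀⟩ = -∑ i, o i / m_(z i)` this gives `m_min ‖X_M - X₀‖_F² ≤ 2 ∑ i, o i`.
-/

open Finset

section Frobenius

variable {n : ℕ}

lemma ip_sub_left (A B C : Matrix (Fin n) (Fin n) ℝ) : ip (A - B) C = ip A C - ip B C := by
  simp only [ip, Matrix.sub_apply, sub_mul, sum_sub_distrib]

lemma ip_sub_right (A B C : Matrix (Fin n) (Fin n) ℝ) : ip A (B - C) = ip A B - ip A C := by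
  simp only [ip, Matrix.sub_apply, mul_sub, sum_sub_distrib]

lemma frobSq_sub (A B : Matrix (Fin n) (Fin n) ℝ) :
    frobSq (A - B) = frobSq A - frobSq B - 2 * ip (A - B) B := by
  simp only [frobSq, ip, Matrix.sub_apply, mul_sum, ← sum_sub_distrib]
  exact sum_congr rfl fun i _ => sum_congr rfl fun j _ => by ring

lemma Matrix.PosSemidef.two_mul_apply_le {ι : Type*} [Fintype ι] [DecidableEq ι]
    {X : Matrix ι ι ℝ} (hX : X.PosSemidef) (i j : ι) : 2 * X i j ≤ X i i + X j j := by
  have h := hX.dotProduct_mulVec_nonneg (Pi.single i 1 - Pi.single j 1)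
  have hji : X j i = X i j := hX.isHermitian.apply i j
  simp only [star_trivial, mulVec_sub, mulVec_single, MulOpposite.op_one, one_smul, dotProduct_sub,
    sub_dotProduct, single_dotProduct, col_apply, one_mul] at h
  linarith

lemma frobSq_le_trace {X : Matrix (Fin n) (Fin n) ℝ} (hX : X.PosSemidef)
    (hnn : ∀ i j, 0 ≤ X i j) (hrow : ∀ i, ∑ j, X i j = 1) : frobSq X ≤ X.trace := by
  have hcol : ∀ j, ∑ i, X i j = 1 := fun j => by
    rw [← hrow j]; exact sum_congr rfl fun i _ => by simpa using hX.isHermitian.apply j i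
  have hdiag_left : ∑ i, ∑ j, X i j * X i i = X.trace := by
    simp only [← sum_mul, hrow, one_mul]; rfl
  have hdiag_right : ∑ i, ∑ j, X i j * X j j = X.trace := by
    rw [sum_comm]; simp only [← sum_mul, hcol, one_mul]; rfl
  have hentry : ∀ i j, 2 * X i j ^ 2 ≤ X i j * X i i + X i j * X j j := fun i j => by
    nlinarith [hnn i j, hX.two_mul_apply_le i j]
  have : 2 * frobSq X ≤ 2 * X.trace := by
    calc 2 * frobSq X = ∑ i, ∑ j, 2 * X i j ^ 2 := by simp only [frobSq, mul_sum]
      _ ≤ ∑ i, ∑ j, (X i j * X i i + X i j * X j j) :=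
        sum_le_sum fun i _ => sum_le_sum fun j _ => hentry i j
      _ = 2 * X.trace := by simp only [sum_add_distrib, hdiag_left, hdiag_right]; ring
  linarith

end Frobenius

section Clusters

variable {n r : ℕ} (z : Fin n → Fin r)

def cluster (k : Fin r) : Finset (Fin n) := {i | z i = k}

lemma card_cluster (k : Fin r) : #(cluster z k) = clusterSize z k := rfl

lemma mem_cluster {k : Fin r} {i : Fin n} : i ∈ cluster z k ↔ z i = k := by
  simp [cluster]

lemma clusterSize_pos (hz : Function.Surjective z) (k : Fin r) : 0 < clusterSize z k := by
  obtain ⟨i, hi⟩ := hz k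
  exact card_pos.2 ⟨i, (mem_cluster z).2 hi⟩

lemma mMin_le_clusterSize [NeZero r] (k : Fin r) : mMin z ≤ clusterSize z k :=
  inf'_le _ (mem_univ k)

lemma mMin_pos [NeZero r] (hz : Function.Surjective z) : 0 < mMin z :=
  (lt_inf'_iff _).2 fun k _ => clusterSize_pos z hz k

lemma sum_cluster_const_inv (hz : Function.Surjective z) (k : Fin r) :
    ∑ _i ∈ cluster z k, ((clusterSize z k : ℝ))⁻¹ = 1 := by
  rw [sum_const, card_cluster, nsmul_eq_mul,
    mul_inv_cancel₀ (Nat.cast_ne_zero.2 (clusterSize_pos z hz k).ne')]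

lemma groundTruth_apply (i j : Fin n) :
    groundTruth z i j = if z i = z j then ((clusterSize z (z i) : ℝ))⁻¹ else 0 := rfl

lemma groundTruth_apply_of_not_mem {i j : Fin n} (hj : j ∉ cluster z (z i)) :
    groundTruth z i j = 0 :=
  if_neg fun h => hj ((mem_cluster z).2 h.symm)

lemma sum_mul_groundTruth_row (A : Matrix (Fin n) (Fin n) ℝ) (i : Fin n) :
    ∑ j, A i j * groundTruth z i j
      = ((clusterSize z (z i) : ℝ))⁻¹ * ∑ j ∈ cluster z (z i), A i j := by
  simp [groundTruth, cluster, mul_sum, sum_filter, eq_comm, mul_comm]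

lemma sum_cluster_groundTruth (hz : Function.Surjective z) (i : Fin n) :
    ∑ j ∈ cluster z (z i), groundTruth z i j = 1 := by
  rw [← sum_cluster_const_inv z hz (z i)]
  exact sum_congr rfl fun j hj => if_pos ((mem_cluster z).1 hj).symm

lemma sum_groundTruth_row (hz : Function.Surjective z) (i : Fin n) :
    ∑ j, groundTruth z i j = 1 := by
  rw [← sum_add_sum_compl (cluster z (z i)), sum_cluster_groundTruth z hz,
    sum_eq_zero fun j hj => groundTruth_apply_of_not_mem z (mem_compl.1 hj), add_zero]

lemma sum_inv_clusterSize (hz : Function.Surjective z) :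
    ∑ i, ((clusterSize z (z i) : ℝ))⁻¹ = r :=
  calc ∑ i, ((clusterSize z (z i) : ℝ))⁻¹
      = ∑ k, ∑ _i ∈ cluster z k, ((clusterSize z k : ℝ))⁻¹ :=
        (sum_fiberwise' univ z fun k => ((clusterSize z k : ℝ))⁻¹).symm
    _ = ∑ _k : Fin r, 1 := sum_congr rfl fun k _ => sum_cluster_const_inv z hz k
    _ = r := by simp

lemma trace_groundTruth (hz : Function.Surjective z) : (groundTruth z).trace = r :=
  (sum_congr rfl fun _ _ => if_pos rfl).trans (sum_inv_clusterSize z hz)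

lemma frobSq_groundTruth (hz : Function.Surjective z) : frobSq (groundTruth z) = r := by
  simp only [frobSq, sq, sum_mul_groundTruth_row, sum_cluster_groundTruth z hz, mul_one]
  exact sum_inv_clusterSize z hz

lemma groundTruth_eq_sum :
    groundTruth z = ∑ k, ((clusterSize z k : ℝ))⁻¹ •
      vecMulVec (fun i => if z i = k then 1 else 0) (fun i => if z i = k then 1 else 0) := by
  ext i j
  by_cases h : z i = z j <;> simp [groundTruth, vecMulVec, Matrix.sum_apply, h]

lemma groundTruth_posSemidef : (groundTruth z).PosSemidef := by
  rw [groundTruth_eq_sum]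
  exact posSemidef_sum _ fun k _ =>
    (posSemidef_vecMulVec_self_star _).smul (inv_nonneg.2 (Nat.cast_nonneg _))

lemma groundTruth_mem_feasSet [NeZero r] (hz : Function.Surjective z) :
    feasSet z (groundTruth z) := by
  have hmin : (0 : ℝ) < mMin z := Nat.cast_pos.2 (mMin_pos z hz)
  refine ⟨groundTruth_posSemidef z, fun i j => ?_, fun i j => ?_, sum_groundTruth_row z hz,
    trace_groundTruth z hz⟩
  · rw [groundTruth_apply]; split_ifs <;> positivity
  · rw [groundTruth_apply]
    split_ifs
    · exact inv_anti₀ hmin (Nat.cast_le.2 (mMin_le_clusterSize z _))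
    · exact inv_nonneg.2 hmin.le

def offBlockMass (X : Matrix (Fin n) (Fin n) ℝ) (i : Fin n) : ℝ :=
  ∑ j ∈ (cluster z (z i))ᶜ, X i j

lemma offBlockMass_nonneg {X : Matrix (Fin n) (Fin n) ℝ} (hnn : ∀ i j, 0 ≤ X i j) (i : Fin n) :
    0 ≤ offBlockMass z X i :=
  sum_nonneg fun j _ => hnn i j

lemma sum_cluster_eq_one_sub_offBlockMass {X : Matrix (Fin n) (Fin n) ℝ} {i : Fin n}
    (hrow : ∑ j, X i j = 1) : ∑ j ∈ cluster z (z i), X i j = 1 - offBlockMass z X i := by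
  rw [← hrow, ← sum_add_sum_compl (cluster z (z i)), offBlockMass, add_sub_cancel_right]

lemma ip_sub_groundTruth_groundTruth (hz : Function.Surjective z)
    {X : Matrix (Fin n) (Fin n) ℝ} (hrow : ∀ i, ∑ j, X i j = 1) :
    ip (X - groundTruth z) (groundTruth z)
      = -∑ i, ((clusterSize z (z i) : ℝ))⁻¹ * offBlockMass z X i := by
  rw [← sum_neg_distrib]
  refine sum_congr rfl fun i _ => ?_
  rw [sum_mul_groundTruth_row]
  simp only [Matrix.sub_apply, sum_sub_distrib, sum_cluster_eq_one_sub_offBlockMass z (hrow i),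
    sum_cluster_groundTruth z hz]
  ring

lemma mMin_mul_frobSq_sub_groundTruth_le [NeZero r] (hz : Function.Surjective z)
    {X : Matrix (Fin n) (Fin n) ℝ} (hX : feasSet z X) :
    mMin z * frobSq (X - groundTruth z) ≤ 2 * ∑ i, offBlockMass z X i := by
  obtain ⟨hpsd, hnn, -, hrow, htr⟩ := hX
  have hfrob : frobSq (X - groundTruth z)
      ≤ 2 * ∑ i, ((clusterSize z (z i) : ℝ))⁻¹ * offBlockMass z X i := by
    have := frobSq_le_trace hpsd hnn hrow
    rw [frobSq_sub, frobSq_groundTruth z hz, ip_sub_groundTruth_groundTruth z hz hrow]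
    linarith
  have hweight : ∀ i, mMin z * (((clusterSize z (z i) : ℝ))⁻¹ * offBlockMass z X i)
      ≤ offBlockMass z X i := fun i => by
    have hm : (0 : ℝ) < clusterSize z (z i) := Nat.cast_pos.2 (clusterSize_pos z hz (z i))
    rw [← mul_assoc, ← div_eq_mul_inv]
    exact mul_le_of_le_one_left (offBlockMass_nonneg z hnn i)
      ((div_le_one₀ hm).2 (Nat.cast_le.2 (mMin_le_clusterSize z _)))
  calc mMin z * frobSq (X - groundTruth z)
      ≤ mMin z * (2 * ∑ i, ((clusterSize z (z i) : ℝ))⁻¹ * offBlockMass z X i) :=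
        mul_le_mul_of_nonneg_left hfrob (Nat.cast_nonneg _)
    _ ≤ 2 * ∑ i, offBlockMass z X i := by
        rw [mul_left_comm, mul_sum]; gcongr with i; exact hweight i

lemma ip_reference_sub_groundTruth_le (hz : Function.Surjective z)
    {X Q : Matrix (Fin n) (Fin n) ℝ} {βin βout : Fin r → ℝ} {δ : ℝ}
    (hgap : ∀ k, δ ≤ βin k - βout k)
    (hQin : ∀ i j, z i = z j → Q i j = βin (z i))
    (hQout : ∀ i j, z i ≠ z j → Q i j ≤ βout (z i))
    (hnn : ∀ i j, 0 ≤ X i j) (hrow : ∀ i, ∑ j, X i j = 1) :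
    ip Q (X - groundTruth z) ≤ -(δ * ∑ i, offBlockMass z X i) := by
  have hrowbound : ∀ i, ∑ j, Q i j * (X - groundTruth z) i j ≤ -(δ * offBlockMass z X i) := by
    intro i
    have hin : ∑ j ∈ cluster z (z i), Q i j * (X - groundTruth z) i j
        = -(βin (z i) * offBlockMass z X i) := by
      rw [← sum_congr rfl fun j hj => by rw [hQin i j ((mem_cluster z).1 hj).symm], ← mul_sum]
      simp only [Matrix.sub_apply, sum_sub_distrib, sum_cluster_eq_one_sub_offBlockMass z (hrow i),
        sum_cluster_groundTruth z hz]
      ring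
    have hout : ∑ j ∈ (cluster z (z i))ᶜ, Q i j * (X - groundTruth z) i j
        ≤ βout (z i) * offBlockMass z X i := by
      rw [offBlockMass, mul_sum]
      refine sum_le_sum fun j hj => ?_
      have hj' := mem_compl.1 hj
      rw [Matrix.sub_apply, groundTruth_apply_of_not_mem z hj', sub_zero]
      exact mul_le_mul_of_nonneg_right
        (hQout i j fun h => hj' ((mem_cluster z).2 h.symm)) (hnn i j)
    have := mul_le_mul_of_nonneg_right (hgap (z i)) (offBlockMass_nonneg z hnn i)
    rw [← sum_add_sum_compl (cluster z (z i)), hin]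
    linarith
  calc ip Q (X - groundTruth z) ≤ ∑ i, -(δ * offBlockMass z X i) :=
        sum_le_sum fun i _ => hrowbound i
    _ = -(δ * ∑ i, offBlockMass z X i) := by rw [mul_sum, sum_neg_distrib]

end Clusters

theorem sdp_reference_bound_general {n r : ℕ} [NeZero r] (z : Fin n → Fin r)
    (hz : Function.Surjective z)
    (M : Matrix (Fin n) (Fin n) ℝ)
    (XM : Matrix (Fin n) (Fin n) ℝ) (hfeas : feasSet z XM)
    (hopt : ∀ X, feasSet z X → ip M X ≤ ip M XM)
    (βin βout : Fin r → ℝ) (Q : Matrix (Fin n) (Fin n) ℝ)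
    (hQin : ∀ i j, z i = z j → Q i j = βin (z i))
    (hQout : ∀ i j, z i ≠ z j → 0 ≤ Q i j ∧ Q i j ≤ βout (z i))
    (hsep : 0 ≤ rMin fun k => βin k - βout k) :
    (mMin z : ℝ) * (rMin fun k => βin k - βout k) * frobSq (XM - groundTruth z)
      ≤ 2 * ip (M - Q) (XM - groundTruth z) := by
  set δ := rMin fun k => βin k - βout k
  have hgap : ∀ k, δ ≤ βin k - βout k := fun k => inf'_le _ (mem_univ k)
  have hM : 0 ≤ ip M (XM - groundTruth z) := by
    rw [ip_sub_right]
    exact sub_nonneg.2 (hopt _ (groundTruth_mem_feasSet z hz))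
  have hfrob := mMin_mul_frobSq_sub_groundTruth_le z hz hfeas
  obtain ⟨-, hnn, -, hrow, -⟩ := hfeas
  have hQ := ip_reference_sub_groundTruth_le z hz hgap hQin (fun i j h => (hQout i j h).2) hnn hrow
  calc (mMin z : ℝ) * δ * frobSq (XM - groundTruth z)
      = δ * (mMin z * frobSq (XM - groundTruth z)) := by ring
    _ ≤ δ * (2 * ∑ i, offBlockMass z XM i) := mul_le_mul_of_nonneg_left hfrob hsep
    _ ≤ 2 * ip (M - Q) (XM - groundTruth z) := by rw [ip_sub_left]; linarith

/-- **Lemma 1.** If `X_M` maximizes `⟨M, X⟩` over the feasible set `F` and `Q`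
is a reference matrix that equals `β_k^{in}` on the diagonal block of cluster `k` and whose
off-diagonal-block entries in row-block `k` lie in `[0, β_k^{out}]`, with
`min_k (β_k^{in} − β_k^{out}) ≥ 0`, then
`m_min · min_k (β_k^{in} − β_k^{out}) · ‖X_M − X₀‖_F² ≤ 2 ⟨M − Q, X_M − X₀⟩`. -/
theorem sdp_reference_bound {n r : ℕ} [NeZero r] (z : Fin n → Fin r)
    (hz : Function.Surjective z)
    (M : Matrix (Fin n) (Fin n) ℝ) (hM : M.IsSymm)
    (XM : Matrix (Fin n) (Fin n) ℝ) (hfeas : feasSet z XM)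
    (hopt : ∀ X, feasSet z X → ip M X ≤ ip M XM)
    (βin βout : Fin r → ℝ) (Q : Matrix (Fin n) (Fin n) ℝ)
    (hQin : ∀ i j, z i = z j → Q i j = βin (z i))
    (hQout : ∀ i j, z i ≠ z j → 0 ≤ Q i j ∧ Q i j ≤ βout (z i))
    (hsep : 0 ≤ rMin fun k => βin k - βout k) :
    (mMin z : ℝ) * (rMin fun k => βin k - βout k) * frobSq (XM - groundTruth z)
      ≤ 2 * ip (M - Q) (XM - groundTruth z) :=
  sdp_reference_bound_general z hz M XM hfeas hopt βin βout Q hQin hQout hsep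
end
end

section
/- Let X ∈ ℝ^{n×n} have nonnegative entries with every row sum equal to 1, and let Q ∈ ℝ^{n×n} satisfy Q_{ij} = β_k^{in} for all i,j ∈ C_k and 0 ≤ Q_{ij} ≤ β_k^{out} for all i ∈ C_k, j ∈ C_ℓ with k ≠ ℓ. Then 1 − Σ_{j∈C_k} X_{ij} ≥ 0 for every i ∈ C_k, and ⟨Q, X₀ − X⟩ ≥ min_k (β_k^{in} − β_k^{out}) · Σ_{k=1}^{r} Σ_{i∈C_k} (1 − Σ_{j∈C_k} X_{ij}). -/
open Matrix

noncomputable section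

/-- For `X` with nonnegative entries and unit row sums and a reference matrix
`Q` as in Lemma 1: each `1 − ∑_{j ∈ C_k} X_{ij} ≥ 0` for `i ∈ C_k`, and
`⟨Q, X₀ − X⟩ ≥ min_k (β_k^{in} − β_k^{out}) · ∑_k ∑_{i ∈ C_k} (1 − ∑_{j ∈ C_k} X_{ij})`. -/
theorem reference_ip_lower_bound {n r : ℕ} [NeZero r] (z : Fin n → Fin r)
    (hz : Function.Surjective z)
    (X : Matrix (Fin n) (Fin n) ℝ) (hnn : ∀ i j, 0 ≤ X i j)
    (hrow : ∀ i, ∑ j, X i j = 1)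
    (βin βout : Fin r → ℝ) (Q : Matrix (Fin n) (Fin n) ℝ)
    (hQin : ∀ i j, z i = z j → Q i j = βin (z i))
    (hQout : ∀ i j, z i ≠ z j → 0 ≤ Q i j ∧ Q i j ≤ βout (z i)) :
    (∀ i, 0 ≤ 1 - ∑ j ∈ Finset.univ.filter (fun j => z j = z i), X i j) ∧
    (rMin fun k => βin k - βout k) *
        (∑ k, ∑ i ∈ Finset.univ.filter (fun i => z i = k),
          (1 - ∑ j ∈ Finset.univ.filter (fun j => z j = k), X i j))
      ≤ ip Q (groundTruth z - X) := by
  have key : ∀ i, 0 ≤ 1 - ∑ j ∈ Finset.univ.filter (fun j => z j = z i), X i j := by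
    intro i
    have h1 : ∑ j ∈ Finset.univ.filter (fun j => z j = z i), X i j ≤ ∑ j, X i j :=
      Finset.sum_le_sum_of_subset_of_nonneg (Finset.filter_subset _ _)
        (fun j _ _ => hnn i j)
    linarith [hrow i]
  refine ⟨key, ?_⟩
  set c : ℝ := rMin fun k => βin k - βout k with hc
  set f : Fin n → ℝ := fun i => 1 - ∑ j ∈ Finset.univ.filter (fun j => z j = z i), X i j
    with hf
  have hsum : (∑ k, ∑ i ∈ Finset.univ.filter (fun i => z i = k),
      (1 - ∑ j ∈ Finset.univ.filter (fun j => z j = k), X i j)) = ∑ i, f i := by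
    rw [← Finset.sum_fiberwise Finset.univ z f]
    refine Finset.sum_congr rfl fun k _ => Finset.sum_congr rfl fun i hi => ?_
    simp only [Finset.mem_filter] at hi
    rw [hf]
    simp [hi.2]
  have row : ∀ i, c * f i ≤ ∑ j, Q i j * (groundTruth z i j - X i j) := by
    intro i
    have hcard : (Finset.univ.filter fun j => z j = z i).card = clusterSize z (z i) := rfl
    have hpos : 0 < ((clusterSize z (z i) : ℝ)) := by
      have : i ∈ Finset.univ.filter fun j => z j = z i := by simp
      have := Finset.card_pos.mpr ⟨i, this⟩
      rw [hcard] at this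
      exact_mod_cast this
    have hX0 : ∑ j, Q i j * groundTruth z i j = βin (z i) := by
      rw [← Finset.sum_filter_add_sum_filter_not Finset.univ (fun j => z j = z i)]
      have h1 : ∑ j ∈ Finset.univ.filter (fun j => z j = z i), Q i j * groundTruth z i j
          = βin (z i) := by
        have hterm : ∀ j ∈ Finset.univ.filter (fun j => z j = z i),
            Q i j * groundTruth z i j = βin (z i) * ((clusterSize z (z i) : ℝ))⁻¹ := by
          intro j hj
          simp only [Finset.mem_filter] at hj
          rw [hQin i j hj.2.symm, groundTruth]
          simp only [Matrix.of_apply]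
          rw [if_pos hj.2.symm]
        rw [Finset.sum_congr rfl hterm, Finset.sum_const, hcard, nsmul_eq_mul]
        field_simp
      have h2 : ∑ j ∈ Finset.univ.filter (fun j => ¬ z j = z i),
          Q i j * groundTruth z i j = 0 := by
        refine Finset.sum_eq_zero fun j hj => ?_
        simp only [Finset.mem_filter] at hj
        have hgt : groundTruth z i j = 0 := by
          rw [groundTruth]
          simp only [Matrix.of_apply]
          rw [if_neg (fun h => hj.2 h.symm)]
        rw [hgt, mul_zero]
      rw [h1, h2, add_zero]
    set S : ℝ := ∑ j ∈ Finset.univ.filter (fun j => z j = z i), X i j with hS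
    have hQX : ∑ j, Q i j * X i j ≤ βin (z i) * S + βout (z i) * (1 - S) := by
      rw [← Finset.sum_filter_add_sum_filter_not Finset.univ (fun j => z j = z i)]
      have h1 : ∑ j ∈ Finset.univ.filter (fun j => z j = z i), Q i j * X i j
          = βin (z i) * S := by
        rw [hS, Finset.mul_sum]
        exact Finset.sum_congr rfl fun j hj => by
          simp only [Finset.mem_filter] at hj
          rw [hQin i j hj.2.symm]
      have h2 : ∑ j ∈ Finset.univ.filter (fun j => ¬ z j = z i), Q i j * X i j
          ≤ βout (z i) * (1 - S) := by
        have hcompl : ∑ j ∈ Finset.univ.filter (fun j => ¬ z j = z i), X i j = 1 - S := by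
          have := Finset.sum_filter_add_sum_filter_not Finset.univ
            (fun j => z j = z i) (fun j => X i j)
          rw [hrow i] at this
          linarith [this]
        calc ∑ j ∈ Finset.univ.filter (fun j => ¬ z j = z i), Q i j * X i j
            ≤ ∑ j ∈ Finset.univ.filter (fun j => ¬ z j = z i), βout (z i) * X i j := by
              refine Finset.sum_le_sum fun j hj => ?_
              simp only [Finset.mem_filter] at hj
              exact mul_le_mul_of_nonneg_right
                ((hQout i j (fun h => hj.2 h.symm)).2) (hnn i j)
          _ = βout (z i) * (1 - S) := by rw [← Finset.mul_sum, hcompl]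
      linarith
    have hcle : c ≤ βin (z i) - βout (z i) := Finset.inf'_le _ (Finset.mem_univ (z i))
    have hfi : 0 ≤ f i := key i
    have hfS : f i = 1 - S := rfl
    have hmain : ∑ j, Q i j * (groundTruth z i j - X i j)
        = βin (z i) - ∑ j, Q i j * X i j := by
      simp only [mul_sub]
      rw [Finset.sum_sub_distrib, hX0]
    rw [hmain, hfS]
    nlinarith [mul_le_mul_of_nonneg_right hcle hfi]
  have : c * ∑ i, f i ≤ ∑ i, ∑ j, Q i j * (groundTruth z i j - X i j) := by
    rw [Finset.mul_sum]
    exact Finset.sum_le_sum fun i _ => row i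
  rw [hsum]
  refine this.trans_eq ?_
  simp [ip, Matrix.sub_apply]
end
end

section
/- Let Y_1,…,Y_n ∈ ℝ^d, let f : [0,∞) → (0,1] be nonincreasing, and let K_{ij} = f(‖Y_i − Y_j‖). Fix centers μ_k ∈ ℝ^d and radii Δ_k ≥ 0 with d_{kℓ} := ‖μ_k − μ_ℓ‖ ≥ Δ_k + Δ_ℓ for k ≠ ℓ, define the good sets S_k = {i ∈ C_k : ‖Y_i − μ_k‖ ≤ Δ_k}, S = ∪_k S_k, m_c = n − |S|, and define the reference matrix K_I by (K_I)_{ij} = f(2Δ_k) if i,j ∈ C_k and (K_I)_{ij} = min{ f(d_{kℓ} − Δ_k − Δ_ℓ), K_{ij} } if i ∈ C_k, j ∈ C_ℓ with k ≠ ℓ. Then ‖K − K_I‖_{∞→1} ≤ Σ_k m_k² (1 − f(2Δ_k)) + 2 m_c n. -/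
open scoped Classical

noncomputable section

/-- The `ℓ∞ → ℓ1` norm of a real `n × n` matrix:
`‖M‖_{∞→1} = max_{x, y ∈ {±1}ⁿ} ∑_{ij} x_i y_j M_{ij}`. -/
def linfOneNorm {n : ℕ} (M : Matrix (Fin n) (Fin n) ℝ) : ℝ :=
  Finset.univ.sup' Finset.univ_nonempty fun xy : (Fin n → Bool) × (Fin n → Bool) =>
    ∑ i, ∑ j, (if xy.1 i then (1 : ℝ) else -1) * (if xy.2 j then (1 : ℝ) else -1) * M i j

/-- With `K_{ij} = f(‖Y_i − Y_j‖)` for a nonincreasing `f : [0,∞) → (0,1]`,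
centers `μ_k` and radii `Δ_k ≥ 0` with `d_{kℓ} ≥ Δ_k + Δ_ℓ` for `k ≠ ℓ`, good sets
`S_k = {i ∈ C_k : ‖Y_i − μ_k‖ ≤ Δ_k}`, `m_c = n − |S|`, and the reference matrix `K_I`,
one has `‖K − K_I‖_{∞→1} ≤ ∑_k m_k² (1 − f(2Δ_k)) + 2 m_c n`. -/
theorem kernel_reference_linfOne_bound {n r d : ℕ} (z : Fin n → Fin r)
    (hz : Function.Surjective z)
    (Y : Fin n → EuclideanSpace ℝ (Fin d))
    (f : ℝ → ℝ)
    (hf_mono : ∀ x y : ℝ, 0 ≤ x → x ≤ y → f y ≤ f x)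
    (hf_pos : ∀ x : ℝ, 0 ≤ x → 0 < f x) (hf_le : ∀ x : ℝ, 0 ≤ x → f x ≤ 1)
    (μ : Fin r → EuclideanSpace ℝ (Fin d)) (Δ : Fin r → ℝ) (hΔ : ∀ k, 0 ≤ Δ k)
    (hsep : ∀ k l, k ≠ l → Δ k + Δ l ≤ ‖μ k - μ l‖)
    (K KI : Matrix (Fin n) (Fin n) ℝ)
    (hK : ∀ i j, K i j = f ‖Y i - Y j‖)
    (hKI : ∀ i j, KI i j =
      if z i = z j then f (2 * Δ (z i))
      else min (f (‖μ (z i) - μ (z j)‖ - Δ (z i) - Δ (z j))) (K i j)) :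
    linfOneNorm (K - KI) ≤
      (∑ k, (clusterSize z k : ℝ) ^ 2 * (1 - f (2 * Δ k))) +
        2 * ((n : ℝ) -
          ((Finset.univ.filter fun i : Fin n => ‖Y i - μ (z i)‖ ≤ Δ (z i)).card : ℝ)) * n := by
  classical
  set S : Finset (Fin n) := Finset.univ.filter (fun i : Fin n => ‖Y i - μ (z i)‖ ≤ Δ (z i))
    with hSdef
  set c : Fin r → ℝ := fun k => 1 - f (2 * Δ k) with hc
  have hc_nonneg : ∀ k, 0 ≤ c k := fun k =>
    sub_nonneg.mpr (hf_le _ (mul_nonneg (by norm_num) (hΔ k)))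
  have hKpos : ∀ i j, 0 < K i j := fun i j => by rw [hK]; exact hf_pos _ (norm_nonneg _)
  have hKle : ∀ i j, K i j ≤ 1 := fun i j => by rw [hK]; exact hf_le _ (norm_nonneg _)
  have hKIpos : ∀ i j, 0 < KI i j := by
    intro i j; rw [hKI]
    split_ifs with h
    · exact hf_pos _ (mul_nonneg (by norm_num) (hΔ _))
    · refine lt_min (hf_pos _ ?_) (hKpos i j)
      have := hsep (z i) (z j) h
      linarith
  have hKIle : ∀ i j, KI i j ≤ 1 := by
    intro i j; rw [hKI]
    split_ifs with h
    · exact hf_le _ (mul_nonneg (by norm_num) (hΔ _))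
    · exact le_trans (min_le_right _ _) (hKle i j)
  -- pointwise bound
  have hpt : ∀ i j, |(K - KI) i j| ≤
      (if z i = z j then c (z i) else 0) + (if i ∈ S ∧ j ∈ S then 0 else 1) := by
    intro i j
    rw [Matrix.sub_apply]
    by_cases hmem : i ∈ S ∧ j ∈ S
    · obtain ⟨hi, hj⟩ := hmem
      have hi' : ‖Y i - μ (z i)‖ ≤ Δ (z i) := (Finset.mem_filter.mp hi).2
      have hj' : ‖Y j - μ (z j)‖ ≤ Δ (z j) := (Finset.mem_filter.mp hj).2
      have hij : (if i ∈ S ∧ j ∈ S then (0:ℝ) else 1) = 0 := if_pos ⟨hi, hj⟩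
      rw [hij, add_zero]
      by_cases hzz : z i = z j
      · rw [if_pos hzz, hKI, if_pos hzz]
        have h1 : ‖Y i - Y j‖ ≤ 2 * Δ (z i) := by
          have : ‖Y i - Y j‖ = ‖(Y i - μ (z i)) - (Y j - μ (z i))‖ := by
            rw [sub_sub_sub_cancel_right]
          rw [this]
          have hj'' : ‖Y j - μ (z i)‖ ≤ Δ (z i) := by rw [← hzz] at hj'; exact hj'
          calc ‖(Y i - μ (z i)) - (Y j - μ (z i))‖
              ≤ ‖Y i - μ (z i)‖ + ‖Y j - μ (z i)‖ := norm_sub_le _ _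
            _ ≤ 2 * Δ (z i) := by linarith
        have h2 : f (2 * Δ (z i)) ≤ K i j := by
          rw [hK]; exact hf_mono _ _ (norm_nonneg _) h1
        have h3 : K i j ≤ 1 := hKle i j
        rw [abs_le]; constructor <;> simp only [hc] <;> linarith
      · rw [if_neg hzz, hKI, if_neg hzz]
        have hD0 : 0 ≤ ‖μ (z i) - μ (z j)‖ - Δ (z i) - Δ (z j) := by
          have := hsep (z i) (z j) hzz; linarith
        have hD : ‖μ (z i) - μ (z j)‖ - Δ (z i) - Δ (z j) ≤ ‖Y i - Y j‖ := by
          have htri : ‖μ (z i) - μ (z j)‖ ≤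
              ‖μ (z i) - Y i‖ + ‖Y i - Y j‖ + ‖Y j - μ (z j)‖ := by
            have : μ (z i) - μ (z j) =
                (μ (z i) - Y i) + (Y i - Y j) + (Y j - μ (z j)) := by abel
            rw [this]
            exact norm_add₃_le
          have h4 : ‖μ (z i) - Y i‖ = ‖Y i - μ (z i)‖ := norm_sub_rev _ _
          rw [h4] at htri
          linarith
        have h5 : K i j ≤ f (‖μ (z i) - μ (z j)‖ - Δ (z i) - Δ (z j)) := by
          rw [hK]; exact hf_mono _ _ hD0 hD
        rw [min_eq_right h5, sub_self, abs_zero]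
    · rw [if_neg hmem]
      have h6 : (0:ℝ) ≤ if z i = z j then c (z i) else 0 := by
        split_ifs
        · exact hc_nonneg _
        · exact le_refl 0
      have h7 : |K i j - KI i j| ≤ 1 := by
        rw [abs_le]
        constructor <;> linarith [hKpos i j, hKle i j, hKIpos i j, hKIle i j]
      linarith
  -- norm bounded by sum of abs
  have hnorm : linfOneNorm (K - KI) ≤ ∑ i, ∑ j, |(K - KI) i j| := by
    apply Finset.sup'_le
    intro xy _
    refine Finset.sum_le_sum fun i _ => Finset.sum_le_sum fun j _ => ?_
    calc (if xy.1 i then (1:ℝ) else -1) * (if xy.2 j then (1:ℝ) else -1) * (K - KI) i j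
        ≤ |(if xy.1 i then (1:ℝ) else -1) * (if xy.2 j then (1:ℝ) else -1) * (K - KI) i j| :=
          le_abs_self _
      _ = |(K - KI) i j| := by
          rw [abs_mul, abs_mul]
          split_ifs <;> norm_num
  -- sum of first bound term
  have hsum1 : ∑ i, ∑ j, (if z i = z j then c (z i) else 0 : ℝ)
      = ∑ k, (clusterSize z k : ℝ) ^ 2 * c k := by
    rw [← Finset.sum_fiberwise Finset.univ z
      (fun i => ∑ j, (if z i = z j then c (z i) else 0 : ℝ))]
    refine Finset.sum_congr rfl fun k _ => ?_
    have hinner : ∀ i ∈ Finset.univ.filter (fun i => z i = k),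
        (∑ j, (if z i = z j then c (z i) else 0 : ℝ)) = (clusterSize z k : ℝ) * c k := by
      intro i hi
      have hzi : z i = k := (Finset.mem_filter.mp hi).2
      rw [hzi]
      have : ∀ j : Fin n, (if k = z j then c k else 0 : ℝ) = if z j = k then c k else 0 := by
        intro j; simp [eq_comm]
      simp_rw [this]
      rw [← Finset.sum_filter]
      rw [Finset.sum_const, nsmul_eq_mul]
      rfl
    rw [Finset.sum_congr rfl hinner, Finset.sum_const, nsmul_eq_mul]
    have : (Finset.univ.filter fun i => z i = k).card = clusterSize z k := rfl
    rw [this]; ring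
  -- sum of second bound term
  have hcard : ∑ i, (if i ∈ S then (1:ℝ) else 0) = (S.card : ℝ) := by
    rw [Finset.sum_boole]
    congr 1
    simp [Finset.filter_mem_eq_inter]
  have hsum2 : ∑ i, ∑ j, (if i ∈ S ∧ j ∈ S then (0:ℝ) else 1)
      = (n : ℝ) * n - (S.card : ℝ) * (S.card : ℝ) := by
    have hchi : ∀ i j : Fin n, (if i ∈ S ∧ j ∈ S then (0:ℝ) else 1)
        = 1 - (if i ∈ S then (1:ℝ) else 0) * (if j ∈ S then (1:ℝ) else 0) := by
      intro i j
      by_cases hi : i ∈ S <;> by_cases hj : j ∈ S <;> simp [hi, hj]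
    simp_rw [hchi]
    have h1 : ∀ i : Fin n, ∑ j : Fin n,
        ((1:ℝ) - (if i ∈ S then (1:ℝ) else 0) * (if j ∈ S then (1:ℝ) else 0))
        = (n:ℝ) - (if i ∈ S then (1:ℝ) else 0) * (S.card : ℝ) := by
      intro i
      rw [Finset.sum_sub_distrib, Finset.sum_const, Finset.card_univ, Fintype.card_fin,
        ← Finset.mul_sum, hcard, nsmul_eq_mul, mul_one]
    simp_rw [h1]
    rw [Finset.sum_sub_distrib, Finset.sum_const, Finset.card_univ, Fintype.card_fin,
      ← Finset.sum_mul, hcard, nsmul_eq_mul]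
  have hSle : (S.card : ℝ) ≤ n := by
    have := Finset.card_filter_le Finset.univ (fun i : Fin n => ‖Y i - μ (z i)‖ ≤ Δ (z i))
    rw [Finset.card_univ, Fintype.card_fin] at this
    exact_mod_cast this
  have hSnn : (0:ℝ) ≤ S.card := Nat.cast_nonneg _
  calc linfOneNorm (K - KI) ≤ ∑ i, ∑ j, |(K - KI) i j| := hnorm
    _ ≤ ∑ i, ∑ j, ((if z i = z j then c (z i) else 0) + (if i ∈ S ∧ j ∈ S then 0 else 1)) :=
        Finset.sum_le_sum fun i _ => Finset.sum_le_sum fun j _ => hpt i j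
    _ = (∑ i, ∑ j, (if z i = z j then c (z i) else 0 : ℝ))
        + ∑ i, ∑ j, (if i ∈ S ∧ j ∈ S then (0:ℝ) else 1) := by
        simp_rw [Finset.sum_add_distrib]
    _ = (∑ k, (clusterSize z k : ℝ) ^ 2 * c k)
        + ((n : ℝ) * n - (S.card : ℝ) * (S.card : ℝ)) := by rw [hsum1, hsum2]
    _ ≤ (∑ k, (clusterSize z k : ℝ) ^ 2 * (1 - f (2 * Δ k)))
        + 2 * ((n : ℝ) - (S.card : ℝ)) * n := by
        have : (n : ℝ) * n - (S.card : ℝ) * (S.card : ℝ) ≤ 2 * ((n : ℝ) - S.card) * n := by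
          nlinarith
        simp only [hc]
        linarith
end
end

section
/- Let M ∈ ℝ^{d×d} be symmetric positive semidefinite of rank r−1 with smallest nonzero eigenvalue λ, let S = M + σ̄² I_d where 0 ≤ σ̄² ≤ σ_max², and let Ŝ ∈ ℝ^{d×d} be symmetric with operator norm ‖Ŝ − S‖ ≤ ε. If λ > 5(σ_max² + ε), then for every vector v in the column span of M, the orthogonal projection of v onto the span of the top r−1 eigenvectors of Ŝ has Euclidean norm at least ‖v‖/2; equivalently, if U_{r−1} ∈ ℝ^{d×(r−1)} has the top r−1 orthonormal eigenvectors of Ŝ as columns, then ‖U_{r−1}ᵀ v‖ ≥ ‖v‖/2. -/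
/-!
Write `v = M y` and split `v = U Uᵀ v + b` with `Uᵀ b = 0`. By Courant–Fischer the Rayleigh
quotient of `Ŝ` on `(col U)ᗮ` is at most `σ̄² + ε`: otherwise `Ŝ - (σ̄² + ε)` would be positive
definite on `col U + ℝ w` for some `w ⊥ col U`, a space of dimension `r > rank M` and hence
meeting `ker M`, where `Ŝ ≤ S + ε = σ̄² + ε`. Since also `Ŝ ≥ M + σ̄² - ε`, this gives
`bᵀ M b ≤ 2ε ‖b‖²`. The spectral gap of `M` gives `λ M ≤ M²`, so expanding
`(b - λ y)ᵀ M (b - λ y) ≥ 0` yields `2λ ‖b‖² = 2λ bᵀ M y ≤ bᵀ M b + λ ‖v‖²`. With `λ > 5ε`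
these force `‖b‖² ≤ 3 ‖Uᵀ v‖²`, i.e. `‖v‖² ≤ 4 ‖Uᵀ v‖²`.
-/

open Matrix

noncomputable section

/-- `U` consists of (orthonormal) top-`m` eigenvectors of the symmetric matrix `S`:
the columns of `U` are orthonormal eigenvectors of `S`, whose eigenvalues dominate the
Rayleigh quotient of `S` on the orthogonal complement of the column span of `U`. -/
def IsTopEigenvectors {d m : ℕ} (S : Matrix (Fin d) (Fin d) ℝ)
    (U : Matrix (Fin d) (Fin m) ℝ) : Prop :=
  Uᵀ * U = 1 ∧
    ∃ θ : Fin m → ℝ,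
      (∀ j, S.mulVec (fun i => U i j) = θ j • fun i => U i j) ∧
        ∀ w : Fin d → ℝ, (∀ j, (fun i => U i j) ⬝ᵥ w = 0) →
          ∀ j, w ⬝ᵥ S.mulVec w ≤ θ j * (w ⬝ᵥ w)

section DotProduct

variable {n m : Type*} [Fintype n] [Fintype m]

theorem dotProduct_self_nonneg_real (x : n → ℝ) : 0 ≤ x ⬝ᵥ x :=
  Finset.sum_nonneg fun _ _ => mul_self_nonneg _

theorem abs_dotProduct_le_sqrt_mul_sqrt (x y : n → ℝ) :
    |x ⬝ᵥ y| ≤ √(x ⬝ᵥ x) * √(y ⬝ᵥ y) := by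
  rw [← Real.sqrt_mul (dotProduct_self_nonneg_real x)]
  exact Real.abs_le_sqrt (by simpa [dotProduct, sq] using Finset.sum_mul_sq_le_sq_mul_sq .univ x y)

theorem abs_dotProduct_mulVec_self_le {E : Matrix n n ℝ} {ε : ℝ}
    (hE : ∀ v : n → ℝ, √(E *ᵥ v ⬝ᵥ E *ᵥ v) ≤ ε * √(v ⬝ᵥ v)) (z : n → ℝ) :
    |z ⬝ᵥ E *ᵥ z| ≤ ε * (z ⬝ᵥ z) :=
  calc |z ⬝ᵥ E *ᵥ z| ≤ √(z ⬝ᵥ z) * √(E *ᵥ z ⬝ᵥ E *ᵥ z) := abs_dotProduct_le_sqrt_mul_sqrt _ _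
    _ ≤ √(z ⬝ᵥ z) * (ε * √(z ⬝ᵥ z)) := by gcongr; exact hE z
    _ = ε * (z ⬝ᵥ z) := by rw [mul_left_comm, Real.mul_self_sqrt (dotProduct_self_nonneg_real z)]

theorem Matrix.IsSymm.dotProduct_mulVec_comm {R : Type*} [CommSemiring R] {A : Matrix n n R}
    (hA : A.IsSymm) (x y : n → R) : x ⬝ᵥ A *ᵥ y = y ⬝ᵥ A *ᵥ x := by
  rw [dotProduct_mulVec, ← mulVec_transpose, hA.eq, dotProduct_comm]

variable [DecidableEq m] {U : Matrix n m ℝ}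

theorem mulVec_dotProduct_mulVec_of_transpose_mul_self (hUU : Uᵀ * U = 1) (c e : m → ℝ) :
    (U *ᵥ c) ⬝ᵥ (U *ᵥ e) = c ⬝ᵥ e := by
  rw [dotProduct_mulVec, ← mulVec_transpose, mulVec_mulVec, hUU, one_mulVec]

theorem transpose_mulVec_sub_mulVec_transpose_mulVec (hUU : Uᵀ * U = 1) (v : n → ℝ) :
    Uᵀ *ᵥ (v - U *ᵥ (Uᵀ *ᵥ v)) = 0 := by
  rw [mulVec_sub, mulVec_mulVec, hUU, one_mulVec, sub_self]

theorem sub_mulVec_transpose_mulVec_dotProduct_self (hUU : Uᵀ * U = 1) (v : n → ℝ) :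
    (v - U *ᵥ (Uᵀ *ᵥ v)) ⬝ᵥ (v - U *ᵥ (Uᵀ *ᵥ v)) = (v - U *ᵥ (Uᵀ *ᵥ v)) ⬝ᵥ v := by
  rw [dotProduct_sub, dotProduct_mulVec, ← mulVec_transpose,
    transpose_mulVec_sub_mulVec_transpose_mulVec hUU, zero_dotProduct, sub_zero]

theorem dotProduct_self_eq_transpose_mulVec_add_sub (hUU : Uᵀ * U = 1) (v : n → ℝ) :
    v ⬝ᵥ v = (Uᵀ *ᵥ v) ⬝ᵥ (Uᵀ *ᵥ v) + (v - U *ᵥ (Uᵀ *ᵥ v)) ⬝ᵥ (v - U *ᵥ (Uᵀ *ᵥ v)) := by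
  have hUv : (U *ᵥ (Uᵀ *ᵥ v)) ⬝ᵥ v = (Uᵀ *ᵥ v) ⬝ᵥ (Uᵀ *ᵥ v) := by
    rw [dotProduct_comm, dotProduct_mulVec, ← mulVec_transpose]
  rw [sub_mulVec_transpose_mulVec_dotProduct_self hUU, sub_dotProduct, hUv]
  ring

end DotProduct

theorem Matrix.exists_ne_zero_mulVec_add_smul_eq_zero {K k n ι : Type*} [Field K] [Fintype k]
    [Fintype n] [Fintype ι] (M : Matrix k n K) (hrank : M.rank ≤ Fintype.card ι)
    (U : Matrix n ι K) (w : n → K) :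
    ∃ (c : ι → K) (t : K), (c ≠ 0 ∨ t ≠ 0) ∧ M *ᵥ (U *ᵥ c + t • w) = 0 := by
  let L : (ι → K) × K →ₗ[K] k → K := M.mulVecLin ∘ₗ
    (U.mulVecLin ∘ₗ LinearMap.fst K _ _ + (LinearMap.snd K _ _).smulRight w)
  have hker : LinearMap.ker L ≠ ⊥ := by
    intro hbot
    have hdim := L.finrank_range_add_finrank_ker
    have hrange : Module.finrank K (LinearMap.range L) ≤ M.rank :=
      Submodule.finrank_mono (LinearMap.range_comp_le_range _ _)
    rw [hbot, finrank_bot, Module.finrank_prod, Module.finrank_fintype_fun_eq_card,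
      Module.finrank_self] at hdim
    omega
  obtain ⟨⟨c, t⟩, hmem, hne⟩ := Submodule.exists_mem_ne_zero_of_ne_bot hker
  refine ⟨c, t, ?_, by simpa [L] using hmem⟩
  by_contra! h
  exact hne (by simp [h])

section PosSemidef

variable {n : Type*} [Fintype n] {A : Matrix n n ℝ}

theorem Matrix.PosSemidef.two_mul_dotProduct_mulVec_le (hA : A.PosSemidef) (t : ℝ)
    (x y : n → ℝ) : 2 * t * (x ⬝ᵥ A *ᵥ y) ≤ x ⬝ᵥ A *ᵥ x + t ^ 2 * (y ⬝ᵥ A *ᵥ y) := by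
  have h := hA.dotProduct_mulVec_nonneg (x - t • y)
  have hyx := (isHermitian_iff_isSymm.mp hA.1).dotProduct_mulVec_comm y x
  simp only [star_trivial, mulVec_sub, mulVec_smul, dotProduct_sub, sub_dotProduct,
    dotProduct_smul, smul_dotProduct, smul_eq_mul, hyx] at h
  nlinarith

theorem Matrix.PosSemidef.mul_dotProduct_mulVec_le [DecidableEq n] (hA : A.PosSemidef) {lam : ℝ}
    (hgap : ∀ i, hA.1.eigenvalues i = 0 ∨ lam ≤ hA.1.eigenvalues i) (y : n → ℝ) :
    lam * (y ⬝ᵥ A *ᵥ y) ≤ (A *ᵥ y) ⬝ᵥ (A *ᵥ y) := by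
  set V : Matrix n n ℝ := (hA.1.eigenvectorUnitary : Matrix n n ℝ)
  set μ := hA.1.eigenvalues
  have hVV : Vᵀ * V = 1 := Unitary.coe_star_mul_self hA.1.eigenvectorUnitary
  have hA_eq : A = V * diagonal μ * Vᵀ := by
    conv_lhs => rw [hA.1.spectral_theorem]
    simp [V, μ, star_eq_conjTranspose, conjTranspose_eq_transpose_of_trivial]
  set q := Vᵀ *ᵥ y
  have hquad : y ⬝ᵥ A *ᵥ y = ∑ i, μ i * q i ^ 2 := by
    rw [hA_eq, ← mulVec_mulVec, ← mulVec_mulVec, dotProduct_mulVec, ← mulVec_transpose]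
    simp only [dotProduct, mulVec_diagonal, q]
    exact Finset.sum_congr rfl fun i _ => by ring
  have hsq : (A *ᵥ y) ⬝ᵥ (A *ᵥ y) = ∑ i, μ i ^ 2 * q i ^ 2 := by
    rw [hA_eq, ← mulVec_mulVec, ← mulVec_mulVec,
      mulVec_dotProduct_mulVec_of_transpose_mul_self hVV]
    simp only [dotProduct, mulVec_diagonal, q]
    exact Finset.sum_congr rfl fun i _ => by ring
  rw [hquad, hsq, Finset.mul_sum]
  refine Finset.sum_le_sum fun i _ => ?_
  rcases hgap i with h | h
  · simp [h]
  · nlinarith [mul_nonneg (hA.eigenvalues_nonneg i) (sq_nonneg (q i))]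

end PosSemidef

section Rayleigh

variable {n m : Type*} [Fintype n] [Fintype m] [DecidableEq m] {S : Matrix n n ℝ}
  {U : Matrix n m ℝ} {θ : m → ℝ} {w : n → ℝ}

theorem Matrix.mul_eq_mul_diagonal_of_mulVec_col
    (h : ∀ j, S *ᵥ (fun i => U i j) = θ j • fun i => U i j) : S * U = U * diagonal θ := by
  ext i j
  rw [mul_diagonal, mul_comm]
  exact congrFun (h j) i

theorem dotProduct_mulVec_add_smul_sub_mul_eq (hS : S.IsSymm) (hUU : Uᵀ * U = 1)
    (hSU : S * U = U * diagonal θ) (hw : Uᵀ *ᵥ w = 0) (s : ℝ) (c : m → ℝ) (t : ℝ) :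
    (U *ᵥ c + t • w) ⬝ᵥ S *ᵥ (U *ᵥ c + t • w) - s * ((U *ᵥ c + t • w) ⬝ᵥ (U *ᵥ c + t • w)) =
      ∑ j, (θ j - s) * c j ^ 2 + t ^ 2 * (w ⬝ᵥ S *ᵥ w - s * (w ⬝ᵥ w)) := by
  have hSUc : S *ᵥ (U *ᵥ c) = U *ᵥ (diagonal θ *ᵥ c) := by rw [mulVec_mulVec, hSU, mulVec_mulVec]
  have hwU : ∀ e, w ⬝ᵥ U *ᵥ e = 0 := fun e => by
    rw [dotProduct_mulVec, ← mulVec_transpose, hw, zero_dotProduct]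
  have hUw : (U *ᵥ c) ⬝ᵥ w = 0 := by rw [dotProduct_comm, hwU]
  have hUSw : (U *ᵥ c) ⬝ᵥ S *ᵥ w = 0 := by rw [hS.dotProduct_mulVec_comm, hSUc, hwU]
  have hdiag : c ⬝ᵥ diagonal θ *ᵥ c = ∑ j, θ j * c j ^ 2 :=
    Finset.sum_congr rfl fun j _ => by rw [mulVec_diagonal]; ring
  have hcc : c ⬝ᵥ c = ∑ j, c j ^ 2 := Finset.sum_congr rfl fun j _ => (sq (c j)).symm
  simp only [mulVec_add, mulVec_smul, dotProduct_add, add_dotProduct, dotProduct_smul,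
    smul_dotProduct, smul_eq_mul, hSUc, mulVec_dotProduct_mulVec_of_transpose_mul_self hUU, hwU,
    hUw, hUSw, hdiag]
  rw [hcc, Finset.sum_congr rfl fun j _ => sub_mul (θ j) s (c j ^ 2), Finset.sum_sub_distrib,
    ← Finset.mul_sum]
  ring

end Rayleigh

/-- Courant–Fischer: if `S > s` at `w`, then `S > s` on all of `col U + ℝ w`, which has
dimension `m + 1 > rank M` and therefore meets `ker M`. -/
theorem IsTopEigenvectors.dotProduct_mulVec_le_of_orthogonal {d m : ℕ}
    {S M : Matrix (Fin d) (Fin d) ℝ} {U : Matrix (Fin d) (Fin m) ℝ} (hU : IsTopEigenvectors S U)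
    (hS : S.IsSymm) (hrank : M.rank ≤ m) {s : ℝ}
    (hker : ∀ z, M *ᵥ z = 0 → z ⬝ᵥ S *ᵥ z ≤ s * (z ⬝ᵥ z)) {w : Fin d → ℝ} (hw : Uᵀ *ᵥ w = 0) :
    w ⬝ᵥ S *ᵥ w ≤ s * (w ⬝ᵥ w) := by
  obtain ⟨hUU, θ, hθ, hdom⟩ := hU
  by_contra! hlt
  have hθs : ∀ j, s < θ j := fun j =>
    lt_of_mul_lt_mul_right (hlt.trans_le (hdom w (congrFun hw) j)) (dotProduct_self_nonneg_real w)
  obtain ⟨c, t, hct, hz⟩ := M.exists_ne_zero_mulVec_add_smul_eq_zero (by simpa using hrank) U w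
  have hle := sub_nonpos.2 (hker _ hz)
  rw [dotProduct_mulVec_add_smul_sub_mul_eq hS hUU (mul_eq_mul_diagonal_of_mulVec_col hθ) hw]
    at hle
  have hterm : ∀ j, 0 ≤ (θ j - s) * c j ^ 2 := fun j =>
    mul_nonneg (sub_nonneg.2 (hθs j).le) (sq_nonneg _)
  have hwpos : 0 < w ⬝ᵥ S *ᵥ w - s * (w ⬝ᵥ w) := sub_pos.2 hlt
  rcases hct with hc | ht
  · obtain ⟨j, hj⟩ := Function.ne_iff.mp hc
    have hpos : 0 < ∑ j, (θ j - s) * c j ^ 2 :=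
      Finset.sum_pos' (fun j _ => hterm j)
        ⟨j, Finset.mem_univ j, mul_pos (sub_pos.2 (hθs j)) (sq_pos_of_ne_zero hj)⟩
    nlinarith [mul_nonneg (sq_nonneg t) hwpos.le]
  · have hpos : 0 < t ^ 2 * (w ⬝ᵥ S *ᵥ w - s * (w ⬝ᵥ w)) := by positivity
    linarith [Finset.sum_nonneg fun j (_ : j ∈ Finset.univ) => hterm j]

theorem abs_dotProduct_mulVec_sub_le {n : Type*} [Fintype n] [DecidableEq n]
    {M S Shat : Matrix n n ℝ} {sbar2 ε : ℝ} (hS : S = M + sbar2 • (1 : Matrix n n ℝ))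
    (hop : ∀ v : n → ℝ, √((Shat - S) *ᵥ v ⬝ᵥ (Shat - S) *ᵥ v) ≤ ε * √(v ⬝ᵥ v)) (z : n → ℝ) :
    |z ⬝ᵥ Shat *ᵥ z - (z ⬝ᵥ M *ᵥ z + sbar2 * (z ⬝ᵥ z))| ≤ ε * (z ⬝ᵥ z) := by
  simpa [hS, sub_mulVec, add_mulVec, smul_mulVec] using abs_dotProduct_mulVec_self_le hop z

theorem IsTopEigenvectors.dotProduct_mulVec_le_two_mul {d m : ℕ}
    {M S Shat : Matrix (Fin d) (Fin d) ℝ} {U : Matrix (Fin d) (Fin m) ℝ} (hU : IsTopEigenvectors Shat U) (hShat : Shat.IsSymm)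
    (hrank : M.rank ≤ m) {sbar2 ε : ℝ} (hS : S = M + sbar2 • (1 : Matrix (Fin d) (Fin d) ℝ))
    (hop : ∀ v : Fin d → ℝ, √((Shat - S) *ᵥ v ⬝ᵥ (Shat - S) *ᵥ v) ≤ ε * √(v ⬝ᵥ v))
    {b : Fin d → ℝ} (hb : Uᵀ *ᵥ b = 0) : b ⬝ᵥ M *ᵥ b ≤ 2 * ε * (b ⬝ᵥ b) := by
  have hker (z : Fin d → ℝ) (hz : M *ᵥ z = 0) : z ⬝ᵥ Shat *ᵥ z ≤ (sbar2 + ε) * (z ⬝ᵥ z) := by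
    have := (abs_le.1 (abs_dotProduct_mulVec_sub_le hS hop z)).2
    rw [hz, dotProduct_zero] at this
    linarith
  have hShat_b := hU.dotProduct_mulVec_le_of_orthogonal hShat hrank hker hb
  linarith [(abs_le.1 (abs_dotProduct_mulVec_sub_le hS hop b)).1]

theorem le_three_mul_of_mul_le {lam ε B C : ℝ} (hlam : 0 < lam) (hε : 5 * ε < lam) (hB : 0 ≤ B)
    (hεB : 0 ≤ ε * B) (h : lam * B ≤ 2 * ε * B + lam * C) : B ≤ 3 * C := by
  nlinarith [mul_nonneg hB (sub_nonneg.2 hε.le)]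

/-- **Lemma on projections.** Let `M` be symmetric PSD of rank `r − 1` with
smallest nonzero eigenvalue `λ`, `S = M + σ̄² I` with `0 ≤ σ̄² ≤ σ_max²`, and `Ŝ` symmetric
with operator norm `‖Ŝ − S‖ ≤ ε`.  If `λ > 5(σ_max² + ε)` and `U` holds the top `r − 1`
eigenvectors of `Ŝ`, then `‖Uᵀ v‖ ≥ ‖v‖ / 2` for every `v` in the column span of `M`. -/
theorem projection_preserves_norm {d r : ℕ}
    (M S Shat : Matrix (Fin d) (Fin d) ℝ)
    (hM : M.PosSemidef) (hrank : M.rank = r - 1)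
    (lam : ℝ)
    (hlam : IsLeast {x : ℝ | x ≠ 0 ∧ ∃ i, hM.1.eigenvalues i = x} lam)
    (sbar2 smax2 ε : ℝ) (hsbar : 0 ≤ sbar2) (hsmax : sbar2 ≤ smax2)
    (hS : S = M + sbar2 • (1 : Matrix (Fin d) (Fin d) ℝ))
    (hShat : Shat.IsSymm)
    (hop : ∀ v : Fin d → ℝ,
      Real.sqrt ((Shat - S).mulVec v ⬝ᵥ (Shat - S).mulVec v) ≤ ε * Real.sqrt (v ⬝ᵥ v))
    (hsep : 5 * (smax2 + ε) < lam)
    (U : Matrix (Fin d) (Fin (r - 1)) ℝ) (hU : IsTopEigenvectors Shat U) :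
    ∀ v : Fin d → ℝ, (∃ w, M.mulVec w = v) →
      Real.sqrt (v ⬝ᵥ v) / 2 ≤ Real.sqrt (Uᵀ.mulVec v ⬝ᵥ Uᵀ.mulVec v) := by
  rintro v ⟨y, rfl⟩
  set c := Uᵀ *ᵥ (M *ᵥ y)
  set b := M *ᵥ y - U *ᵥ c
  have hlam_pos : 0 < lam := by
    obtain ⟨hne, i, rfl⟩ := hlam.1
    exact (hM.eigenvalues_nonneg i).lt_of_ne' hne
  have hgap : ∀ i, hM.1.eigenvalues i = 0 ∨ lam ≤ hM.1.eigenvalues i := fun i =>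
    or_iff_not_imp_left.2 fun h => hlam.2 ⟨h, i, rfl⟩
  have hbM : b ⬝ᵥ M *ᵥ b ≤ 2 * ε * (b ⬝ᵥ b) :=
    hU.dotProduct_mulVec_le_two_mul hShat hrank.le hS hop
      (transpose_mulVec_sub_mulVec_transpose_mulVec hU.1 _)
  have hspec : 2 * lam * (b ⬝ᵥ M *ᵥ y) ≤ b ⬝ᵥ M *ᵥ b + lam * ((M *ᵥ y) ⬝ᵥ (M *ᵥ y)) := by
    have := mul_le_mul_of_nonneg_left (hM.mul_dotProduct_mulVec_le hgap y) hlam_pos.le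
    linarith [hM.two_mul_dotProduct_mulVec_le lam b y]
  have hbMb : 0 ≤ b ⬝ᵥ M *ᵥ b := by simpa using hM.dotProduct_mulVec_nonneg b
  have hbv : b ⬝ᵥ (M *ᵥ y) = b ⬝ᵥ b :=
    (sub_mulVec_transpose_mulVec_dotProduct_self hU.1 _).symm
  have hpyth : (M *ᵥ y) ⬝ᵥ (M *ᵥ y) = c ⬝ᵥ c + b ⬝ᵥ b :=
    dotProduct_self_eq_transpose_mulVec_add_sub hU.1 _
  rw [hbv, hpyth] at hspec
  have hbc : b ⬝ᵥ b ≤ 3 * (c ⬝ᵥ c) :=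
    le_three_mul_of_mul_le (ε := ε) hlam_pos (by linarith) (dotProduct_self_nonneg_real b)
      (by linarith) (by linarith)
  rw [Real.le_sqrt (by positivity) (dotProduct_self_nonneg_real c), div_pow,
    Real.sq_sqrt (dotProduct_self_nonneg_real _), hpyth]
  linarith
end
end

section
/- Let ν ∈ ℝ^{r×r} satisfy νᵀ D ν = I_r, where D = diag(m₁,…,m_r) with all m_k > 0 and m_max = max_k m_k. Then for all k ≠ ℓ, the rows of ν satisfy ‖ν_{k·} − ν_{ℓ·}‖ ≥ √(2/m_max). -/
open Matrix

/-- If `νᵀ D ν = I` with `D = diag(m₁,…,m_r)`, `m_k > 0`, then any two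
distinct rows of `ν` are at Euclidean distance at least `√(2/m_max)`. -/
theorem rows_separated {r : ℕ} (m : Fin r → ℝ) (hm : ∀ k, 0 < m k) (mmax : ℝ)
    (hmmax : IsGreatest (Set.range m) mmax)
    (ν : Matrix (Fin r) (Fin r) ℝ)
    (hν : νᵀ * Matrix.diagonal m * ν = 1) :
    ∀ k l, k ≠ l → Real.sqrt (2 / mmax) ≤ Real.sqrt (∑ j, (ν k j - ν l j) ^ 2) := by
  have hmpos : 0 < mmax := by
    obtain ⟨k0, hk0⟩ := hmmax.1
    exact hk0 ▸ hm k0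
  have h2 : ν * (νᵀ * Matrix.diagonal m) = 1 := mul_eq_one_comm.mp hν
  have hG : ν * νᵀ = Matrix.diagonal (fun k => (m k)⁻¹) := by
    have hD : Matrix.diagonal m * Matrix.diagonal (fun k => (m k)⁻¹) = 1 := by
      rw [Matrix.diagonal_mul_diagonal]
      rw [show (fun i => m i * (m i)⁻¹) = fun _ => (1:ℝ) from
        funext fun i => mul_inv_cancel₀ (hm i).ne']
      exact Matrix.diagonal_one
    calc ν * νᵀ = ν * νᵀ * (Matrix.diagonal m * Matrix.diagonal (fun k => (m k)⁻¹)) := by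
          rw [hD, mul_one]
      _ = (ν * (νᵀ * Matrix.diagonal m)) * Matrix.diagonal (fun k => (m k)⁻¹) := by
          simp only [Matrix.mul_assoc]
      _ = Matrix.diagonal (fun k => (m k)⁻¹) := by rw [h2, one_mul]
  intro k l hkl
  have entry : ∀ a b, ∑ j, ν a j * ν b j = Matrix.diagonal (fun k => (m k)⁻¹) a b := by
    intro a b
    have := congrArg (fun M => M a b) hG
    simpa [Matrix.mul_apply, Matrix.transpose_apply] using this
  have hdk : ∑ j, ν k j * ν k j = (m k)⁻¹ := by simpa using entry k k
  have hdl : ∑ j, ν l j * ν l j = (m l)⁻¹ := by simpa using entry l l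
  have hoff : ∑ j, ν k j * ν l j = 0 := by
    simpa [Matrix.diagonal_apply_ne _ hkl] using entry k l
  have hexp : ∑ j, (ν k j - ν l j) ^ 2 = (m k)⁻¹ - 2 * 0 + (m l)⁻¹ := by
    rw [← hdk, ← hoff, ← hdl, Finset.mul_sum, ← Finset.sum_sub_distrib,
      ← Finset.sum_add_distrib]
    exact Finset.sum_congr rfl fun j _ => by ring
  apply Real.sqrt_le_sqrt
  rw [hexp]
  have hk' : mmax⁻¹ ≤ (m k)⁻¹ :=
    inv_anti₀ (hm k) (hmmax.2 ⟨k, rfl⟩)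
  have hl' : mmax⁻¹ ≤ (m l)⁻¹ :=
    inv_anti₀ (hm l) (hmmax.2 ⟨l, rfl⟩)
  have : 2 / mmax = mmax⁻¹ + mmax⁻¹ := by ring
  rw [this]
  linarith
end
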